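/- arXiv:2406.02752 — 3 statements merged into one kernel-verified Lean document; each statement's English description precedes it below -/
import Mathlib

section
/- Let f(z) = z + Σ_{n≥2} a_n z^n be a normalized analytic germ at 0 and let fᵐ denote its m-th compositional iterate (m ≥ 1). Writing fᵐ(z) = z + Σ_{n≥2} c_n(m) z^n, one has c₂(m) = m a₂, c₃(m) = m a₃ + (m² − m) a₂², and ψ(fᵐ, λ) = m · ψ(f, mλ − m + 1), where ψ(h,λ) is the Fekete–Szegő functional of h. -/
/-!
Differentiating `g ∘ f` at a point where `f x = x` and `f' x = 1` gives
`(g ∘ f)'' = g'' + g' f''` and `(g ∘ f)''' = g''' + 3 g'' f'' + g' f'''`. Feeding `g = fᵐ` into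
these recursions yields `(fᵐ)'' = m f''` and `(fᵐ)''' = m f''' + 3 (m choose 2) f''²`, which are
the coefficient formulas; the identity for `ψ` is then algebra.
-/

/-- The Fekete–Szegő functional `ψ(h,λ) = c₃ - λ c₂²` of an analytic germ at `0`. -/
noncomputable def feketeSzego (f : ℂ → ℂ) (lam : ℂ) : ℂ :=
  iteratedDeriv 3 f 0 / 6 - lam * (iteratedDeriv 2 f 0 / 2) ^ 2

open Function Topology

section

variable {𝕜 : Type*} [NontriviallyNormedField 𝕜] {f g : 𝕜 → 𝕜} {x : 𝕜}

theorem AnalyticAt.iterate (hf : AnalyticAt 𝕜 f x) (hx : IsFixedPt f x) (n : ℕ) :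
    AnalyticAt 𝕜 f^[n] x := by
  induction n with
  | zero => exact analyticAt_id
  | succ n ih =>
    rw [iterate_succ]
    exact (hx.eq.symm ▸ ih).comp hf

theorem deriv_iterate_of_deriv_eq_one (hf : DifferentiableAt 𝕜 f x) (hx : IsFixedPt f x)
    (hf1 : deriv f x = 1) (n : ℕ) : deriv f^[n] x = 1 := by
  have h := HasDerivAt.iterate x hf.hasDerivAt hx.eq n
  rw [hf1, one_pow] at h
  exact h.deriv

variable [CompleteSpace 𝕜]

theorem eventually_analyticAt_comp (hg : AnalyticAt 𝕜 g (f x)) (hf : AnalyticAt 𝕜 f x) :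
    ∀ᶠ y in 𝓝 x, AnalyticAt 𝕜 g (f y) ∧ AnalyticAt 𝕜 f y :=
  (hf.continuousAt.eventually hg.eventually_analyticAt).and hf.eventually_analyticAt

theorem deriv_comp_eventuallyEq (hg : AnalyticAt 𝕜 g (f x)) (hf : AnalyticAt 𝕜 f x) :
    deriv (g ∘ f) =ᶠ[𝓝 x] fun y => deriv g (f y) * deriv f y := by
  filter_upwards [eventually_analyticAt_comp hg hf] with y ⟨hgy, hfy⟩
  exact deriv_comp y hgy.differentiableAt hfy.differentiableAt

theorem hasDerivAt_deriv_comp_mul_deriv (hg : AnalyticAt 𝕜 g (f x)) (hf : AnalyticAt 𝕜 f x) :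
    HasDerivAt (fun y => deriv g (f y) * deriv f y)
      (deriv (deriv g) (f x) * deriv f x ^ 2 + deriv g (f x) * deriv (deriv f) x) x := by
  have hg' : HasDerivAt (fun y => deriv g (f y)) (deriv (deriv g) (f x) * deriv f x) x :=
    hg.deriv.differentiableAt.hasDerivAt.comp x hf.differentiableAt.hasDerivAt
  exact (hg'.fun_mul hf.deriv.differentiableAt.hasDerivAt).congr_deriv (by ring)

theorem deriv_deriv_comp_eventuallyEq (hg : AnalyticAt 𝕜 g (f x)) (hf : AnalyticAt 𝕜 f x) :
    deriv (deriv (g ∘ f)) =ᶠ[𝓝 x] fun y =>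
      deriv (deriv g) (f y) * deriv f y ^ 2 + deriv g (f y) * deriv (deriv f) y := by
  filter_upwards [(deriv_comp_eventuallyEq hg hf).deriv, eventually_analyticAt_comp hg hf]
    with y hy ⟨hgy, hfy⟩
  rw [hy, (hasDerivAt_deriv_comp_mul_deriv hgy hfy).deriv]

theorem deriv_deriv_comp (hg : AnalyticAt 𝕜 g (f x)) (hf : AnalyticAt 𝕜 f x) :
    deriv (deriv (g ∘ f)) x =
      deriv (deriv g) (f x) * deriv f x ^ 2 + deriv g (f x) * deriv (deriv f) x :=
  (deriv_deriv_comp_eventuallyEq hg hf).eq_of_nhds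

theorem deriv_deriv_deriv_comp (hg : AnalyticAt 𝕜 g (f x)) (hf : AnalyticAt 𝕜 f x) :
    deriv (deriv (deriv (g ∘ f))) x =
      deriv (deriv (deriv g)) (f x) * deriv f x ^ 3 +
        3 * deriv (deriv g) (f x) * deriv f x * deriv (deriv f) x +
          deriv g (f x) * deriv (deriv (deriv f)) x := by
  have hf' := hf.deriv.differentiableAt.hasDerivAt
  have hf'' := hf.deriv.deriv.differentiableAt.hasDerivAt
  have hg' : HasDerivAt (fun y => deriv g (f y)) (deriv (deriv g) (f x) * deriv f x) x :=
    hg.deriv.differentiableAt.hasDerivAt.comp x hf.differentiableAt.hasDerivAt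
  have hg'' : HasDerivAt (fun y => deriv (deriv g) (f y))
      (deriv (deriv (deriv g)) (f x) * deriv f x) x :=
    hg.deriv.deriv.differentiableAt.hasDerivAt.comp x hf.differentiableAt.hasDerivAt
  rw [(deriv_deriv_comp_eventuallyEq hg hf).deriv_eq,
    ((hg''.fun_mul (hf'.fun_pow 2)).fun_add (hg'.fun_mul hf'')).deriv]
  push_cast
  ring

theorem deriv_deriv_iterate_of_deriv_eq_one (hf : AnalyticAt 𝕜 f x) (hx : IsFixedPt f x)
    (hf1 : deriv f x = 1) (n : ℕ) : deriv (deriv f^[n]) x = n * deriv (deriv f) x := by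
  induction n with
  | zero => simp
  | succ n ih =>
    rw [iterate_succ, deriv_deriv_comp (hx.eq.symm ▸ hf.iterate hx n) hf, hx.eq, ih,
      deriv_iterate_of_deriv_eq_one hf.differentiableAt hx hf1, hf1]
    push_cast
    ring

theorem deriv_deriv_deriv_iterate_of_deriv_eq_one (hf : AnalyticAt 𝕜 f x) (hx : IsFixedPt f x)
    (hf1 : deriv f x = 1) (n : ℕ) :
    deriv (deriv (deriv f^[n])) x =
      n * deriv (deriv (deriv f)) x + 3 * n.choose 2 * deriv (deriv f) x ^ 2 := by
  induction n with
  | zero => simp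
  | succ n ih =>
    rw [iterate_succ, deriv_deriv_deriv_comp (hx.eq.symm ▸ hf.iterate hx n) hf, hx.eq, ih,
      deriv_deriv_iterate_of_deriv_eq_one hf hx hf1,
      deriv_iterate_of_deriv_eq_one hf.differentiableAt hx hf1, hf1,
      Nat.choose_succ_succ, Nat.choose_one_right]
    push_cast
    ring

end

theorem feketeSzego_iterate_general (f : ℂ → ℂ) (m : ℕ)
    (hf : AnalyticAt ℂ f 0) (hf0 : f 0 = 0) (hf1 : deriv f 0 = 1) :
    iteratedDeriv 2 (f^[m]) 0 / 2 = (m : ℂ) * (iteratedDeriv 2 f 0 / 2) ∧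
    iteratedDeriv 3 (f^[m]) 0 / 6 =
      (m : ℂ) * (iteratedDeriv 3 f 0 / 6) +
        ((m : ℂ) ^ 2 - (m : ℂ)) * (iteratedDeriv 2 f 0 / 2) ^ 2 ∧
    ∀ lam : ℂ,
      feketeSzego (f^[m]) lam = (m : ℂ) * feketeSzego f ((m : ℂ) * lam - (m : ℂ) + 1) := by
  have h2 := deriv_deriv_iterate_of_deriv_eq_one hf hf0 hf1 m
  have h3 := deriv_deriv_deriv_iterate_of_deriv_eq_one hf hf0 hf1 m
  simp only [feketeSzego, iteratedDeriv_succ, iteratedDeriv_zero, h2, h3, Nat.cast_choose_two]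
  refine ⟨by ring, by ring, fun lam => by ring⟩

/-- Coefficients and Fekete–Szegő functional of the `m`-th compositional iterate. -/
theorem feketeSzego_iterate (f : ℂ → ℂ) (m : ℕ) (hm : 1 ≤ m)
    (hf : AnalyticAt ℂ f 0) (hf0 : f 0 = 0) (hf1 : deriv f 0 = 1) :
    iteratedDeriv 2 (f^[m]) 0 / 2 = (m : ℂ) * (iteratedDeriv 2 f 0 / 2) ∧
    iteratedDeriv 3 (f^[m]) 0 / 6 =
      (m : ℂ) * (iteratedDeriv 3 f 0 / 6) +
        ((m : ℂ) ^ 2 - (m : ℂ)) * (iteratedDeriv 2 f 0 / 2) ^ 2 ∧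
    ∀ lam : ℂ,
      feketeSzego (f^[m]) lam = (m : ℂ) * feketeSzego f ((m : ℂ) * lam - (m : ℂ) + 1) :=
  feketeSzego_iterate_general f m hf hf0 hf1
end

section
/- Let X be a complex Banach space with open unit ball B, e ∈ ∂B, e* a support functional at e, and let s : B → ℂ be holomorphic with s(0) = 1 such that s(B) does not separate 0 and ∞ (so that s^{1/n} is well-defined with value 1 at 0). Define f(x) = s(x)·x and g(x) = (s(⟨x,e*⟩ⁿ e))^{1/n} · x. If f is injective on B, then g is injective on B. -/
/-!
Applying `e*` to `g x = g y` gives `σ(aⁿe) a = σ(bⁿe) b` for `a = ⟨x,e*⟩`, `b = ⟨y,e*⟩`. Raising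
this to the `n`-th power and multiplying by `e` gives `f(aⁿe) = f(bⁿe)`, so `aⁿe = bⁿe` by the
univalence of `f`. Hence `x` and `y` are scaled by the same factor `σ(aⁿe)`, which cannot vanish:
otherwise `f(aⁿe) = 0 = f(0)` would force `aⁿe = 0` and `σ(0) = 0`.
-/

open Set Metric

section Algebra

variable {𝕜 E : Type*} [Field 𝕜] [AddCommGroup E] [Module 𝕜 E]

theorem eq_zero_of_injOn_smul_self {s : E → 𝕜} {U : Set E}
    (hf : InjOn (fun x => s x • x) U) (h0 : (0 : E) ∈ U) {z : E} (hz : z ∈ U) (hsz : s z = 0) :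
    z = 0 :=
  hf hz h0 (by simp [hsz])

theorem injOn_root_transform {s σ : E → 𝕜} {U : Set E} (φ : E →ₗ[𝕜] 𝕜) (e : E) {n : ℕ}
    (hn : n ≠ 0) (hU : MapsTo (fun x => φ x ^ n • e) U U) (h0 : (0 : E) ∈ U)
    (hσ0 : σ 0 ≠ 0) (hbranch : ∀ x ∈ U, σ x ^ n = s x) (hf : InjOn (fun x => s x • x) U) :
    InjOn (fun x => σ (φ x ^ n • e) • x) U := by
  intro x hx y hy hxy
  have hxe := hU hx
  have hye := hU hy
  simp only at hxy hxe hye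
  have hφ : σ (φ x ^ n • e) * φ x = σ (φ y ^ n • e) * φ y := by
    simpa using congrArg φ hxy
  have hfe : φ x ^ n • e = φ y ^ n • e := by
    refine hf hxe hye ?_
    simp only [smul_smul, ← hbranch _ hxe, ← hbranch _ hye, ← mul_pow, hφ]
  have hσ : σ (φ x ^ n • e) ≠ 0 := by
    intro hσx
    have hz := eq_zero_of_injOn_smul_self hf h0 hxe (by rw [← hbranch _ hxe, hσx, zero_pow hn])
    exact hσ0 (hz ▸ hσx)
  rw [hfe] at hxy hσ
  exact smul_right_injective E hσ hxy

end Algebra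

theorem mapsTo_pow_smul_ball_one {𝕜 X : Type*} [NontriviallyNormedField 𝕜]
    [NormedAddCommGroup X] [NormedSpace 𝕜 X] (φ : X →L[𝕜] 𝕜) (hφ : ‖φ‖ ≤ 1) {e : X}
    (he : ‖e‖ ≤ 1) {n : ℕ} (hn : n ≠ 0) :
    MapsTo (fun x => φ x ^ n • e) (ball 0 1) (ball 0 1) := by
  intro x hx
  rw [mem_ball_zero_iff] at hx ⊢
  have hφx : ‖φ x‖ < 1 := (φ.le_of_opNorm_le hφ x).trans_lt (by simpa using hx)
  calc ‖φ x ^ n • e‖ = ‖φ x‖ ^ n * ‖e‖ := by rw [norm_smul, norm_pow]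
    _ ≤ ‖φ x‖ ^ n := mul_le_of_le_one_right (by positivity) he
    _ < 1 := pow_lt_one₀ (norm_nonneg _) hφx hn

theorem root_transform_injective_general {X : Type*} [NormedAddCommGroup X] [NormedSpace ℂ X]
    (e : X) (he : ‖e‖ = 1) (estar : X →L[ℂ] ℂ) (hes : ‖estar‖ = 1)
    (n : ℕ) (hn : 1 ≤ n) (s σ : X → ℂ)
    (hσ0 : σ 0 = 1)
    (hbranch : ∀ x ∈ Metric.ball (0 : X) 1, (σ x) ^ n = s x)
    (hf : Set.InjOn (fun x => s x • x) (Metric.ball (0 : X) 1)) :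
    Set.InjOn (fun x => σ ((estar x) ^ n • e) • x) (Metric.ball (0 : X) 1) := by
  have hn0 : n ≠ 0 := Nat.one_le_iff_ne_zero.mp hn
  exact injOn_root_transform (estar : X →ₗ[ℂ] ℂ) e hn0
    (mapsTo_pow_smul_ball_one estar hes.le he.le hn0) (mem_ball_self one_pos)
    (by simp [hσ0]) hbranch hf

/-- Univalence of the `n`-th root transform of a univalent mapping of
one-dimensional type on the unit ball of a complex Banach space. -/
theorem root_transform_injective {X : Type*} [NormedAddCommGroup X] [NormedSpace ℂ X]
    (e : X) (he : ‖e‖ = 1) (estar : X →L[ℂ] ℂ) (hes : ‖estar‖ = 1) (hee : estar e = 1)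
    (n : ℕ) (hn : 1 ≤ n) (s σ : X → ℂ)
    (hs : DifferentiableOn ℂ s (Metric.ball (0 : X) 1))
    (hσ : DifferentiableOn ℂ σ (Metric.ball (0 : X) 1))
    (hs0 : s 0 = 1) (hσ0 : σ 0 = 1)
    (hbranch : ∀ x ∈ Metric.ball (0 : X) 1, (σ x) ^ n = s x)
    (hf : Set.InjOn (fun x => s x • x) (Metric.ball (0 : X) 1)) :
    Set.InjOn (fun x => σ ((estar x) ^ n • e) • x) (Metric.ball (0 : X) 1) :=
  root_transform_injective_general e he estar hes n hn s σ hσ0 hbranch hf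
end

section
/- In the two-dimensional Euclidean space ℂ², the mapping h(x₁,x₂) = (x₁ + x₁²/2, x₂ + x₁²/2) satisfies Re⟨h(x), x⟩ ≥ 0 for all x in the open unit ball, i.e. h belongs to the class M of semigroup generators. -/
/-!
Write `a = x₁`, `b = x₂`. Then `Re⟨h(x), x⟩ = |a|² + |b|² + Re(ā²(a + b))/2`, and the cubic
term is at least `-|a|²(|a| + |b|)/2 ≥ -|a|²` as soon as `|a| + |b| ≤ 2`, which holds on the
unit ball since every coordinate has modulus below `1`.
-/

open ComplexConjugate

namespace Complex

lemma re_conj_add_sq_div_two_mul (a b c : ℂ) :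
    (conj (a + c ^ 2 / 2) * a + conj (b + c ^ 2 / 2) * b).re
      = ‖a‖ ^ 2 + ‖b‖ ^ 2 + (conj (c ^ 2) * (a + b)).re / 2 := by
  have expand : conj (a + c ^ 2 / 2) * a + conj (b + c ^ 2 / 2) * b
      = conj a * a + conj b * b + conj (c ^ 2) * (a + b) / 2 := by
    simp only [map_add, map_div₀, map_pow, map_ofNat]
    ring
  rw [expand, conj_mul', conj_mul', add_re, div_ofNat_re, add_re]
  norm_cast

lemma neg_le_re_conj_sq_mul_add (a b : ℂ) :
    -(‖a‖ ^ 2 * (‖a‖ + ‖b‖)) ≤ (conj (a ^ 2) * (a + b)).re := by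
  refine neg_le_of_abs_le ((abs_re_le_norm _).trans ?_)
  rw [norm_mul, norm_conj, norm_pow]
  gcongr
  exact norm_add_le a b

lemma re_conj_add_sq_div_two_mul_nonneg {a b : ℂ} (hab : ‖a‖ + ‖b‖ ≤ 2) :
    0 ≤ (conj (a + a ^ 2 / 2) * a + conj (b + a ^ 2 / 2) * b).re := by
  rw [re_conj_add_sq_div_two_mul]
  have cubic := neg_le_re_conj_sq_mul_add a b
  have : ‖a‖ ^ 2 * (‖a‖ + ‖b‖) ≤ 2 * ‖a‖ ^ 2 := by nlinarith [sq_nonneg ‖a‖]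
  nlinarith [sq_nonneg ‖b‖]

end Complex

lemma EuclideanSpace.inner_toLp_fin_two (u : Fin 2 → ℂ) (x : EuclideanSpace ℂ (Fin 2)) :
    inner ℂ ((WithLp.equiv 2 (Fin 2 → ℂ)).symm u) x = conj (u 0) * x 0 + conj (u 1) * x 1 := by
  simp [PiLp.inner_apply, Fin.sum_univ_two, mul_comm]

/-- The mapping `h(x₁,x₂) = (x₁ + x₁²/2, x₂ + x₁²/2)` on `ℂ²` satisfies
`Re⟨h(x),x⟩ ≥ 0` on the open Euclidean unit ball, i.e. `h` is a semigroup generator. -/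
theorem h_in_class_M
    (h : EuclideanSpace ℂ (Fin 2) → EuclideanSpace ℂ (Fin 2))
    (hdef : ∀ x, h x = (WithLp.equiv 2 (Fin 2 → ℂ)).symm
      ![x 0 + (x 0) ^ 2 / 2, x 1 + (x 0) ^ 2 / 2])
    (x : EuclideanSpace ℂ (Fin 2)) (hx : ‖x‖ < 1) :
    0 ≤ ((inner ℂ (h x) x : ℂ)).re := by
  rw [hdef, EuclideanSpace.inner_toLp_fin_two]
  have h0 := (PiLp.norm_apply_le x 0).trans hx.le
  have h1 := (PiLp.norm_apply_le x 1).trans hx.le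
  exact Complex.re_conj_add_sq_div_two_mul_nonneg (by linarith)
end
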